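/- arXiv:math/0310452 — 2 statements merged into one kernel-verified Lean document; each statement's English description precedes it below -/
import Mathlib

section
/- Let A be a unital C*-algebra and d ≥ 1. Suppose the data (w_{i,k}), (u_j), (m_i), (n_j), (c_i), r_k, θ₁, x = Σ_{j∈F} d_j u_j and c_x are as in the context. Then for every n ≥ 1 and every sign tuple ε̄ = (ε₁,…,ε_n) ∈ {−1,+1}^n, the (possibly infinite) sum over all tuples k̄ = (k₁,…,k_n) ∈ (ℤ^d)^n of ‖δ^{ε_n}_{k_n}(⋯(δ^{ε₁}_{k₁}(x))⋯)‖ is at most (2·θ₁·c_x)^n. -/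
/-!
Say that `a` commutes outside `S` if it commutes with `w i k` and `star (w i k)` whenever
`k ∉ S i`. Expanding `r k = ∑ᵢ cᵢ • w i k`, one step `δ^{±1}_k a` is a sum of commutators
`a * vᵢ - vᵢ * a` with `‖vᵢ‖ ≤ ‖cᵢ‖`, and the `i`-th one vanishes unless `k ∈ S i`. Since the
`w i k` and their adjoints commute with each other, `a * vᵢ` and `vᵢ * a` again commute outside
the same `S`, so induction on `n` gives `∑_k̄ ‖δ_k̄ a‖ ≤ (2 t)ⁿ ‖a‖` with `t = ∑ᵢ ‖cᵢ‖ #(S i)`.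
For `a = u j` the non-commuting sets have `#(S i) ≤ mᵢ νⱼ`, so `t ≤ θ₁ νⱼ`, and summing over
`x = ∑ⱼ dⱼ • u j` gives `(2 θ₁)ⁿ ∑ⱼ ‖dⱼ‖ νⱼⁿ ≤ (2 θ₁ cx)ⁿ`. Working in `ℝ≥0∞` makes
summability automatic.
-/

open scoped ENNReal

/-- Iterated application of the (signed) derivations
`δ_k(a) = a r_k - r_k a` (sign `+1`), `δ†_k(a) = r_k* a - a r_k*` (sign `-1`),
and the Lindblad map `ℒ_k(a) = (1/2)(δ†_k(a) r_k + r_k* δ_k(a))` (sign `0`),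
applied first with index `0` (innermost) and last with index `n-1` (outermost). -/
noncomputable def deltaIter {A K : Type*} [Ring A] [StarRing A] [Module ℂ A]
    (r : K → A) {n : ℕ} (ε : Fin n → ℤ) (k : Fin n → K) (x : A) : A :=
  (List.ofFn fun l : Fin n => fun a : A =>
    if ε l = 1 then a * r (k l) - r (k l) * a
    else if ε l = -1 then star (r (k l)) * a - a * star (r (k l))
    else (2 : ℂ)⁻¹ • ((star (r (k l)) * a - a * star (r (k l))) * r (k l)
          + star (r (k l)) * (a * r (k l) - r (k l) * a))).foldl (fun a f => f a) x

theorem ENNReal.tsum_pi_fin_succ {K : Type*} {n : ℕ} (f : (Fin (n + 1) → K) → ℝ≥0∞) :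
    ∑' k, f k = ∑' (k₀ : K) (k : Fin n → K), f (Fin.cons k₀ k) := by
  rw [← (Fin.consEquiv fun _ => K).tsum_eq, ENNReal.tsum_prod']
  rfl

theorem summable_norm_and_tsum_le_of_tsum_enorm_le {ι E : Type*} [SeminormedAddCommGroup E]
    {f : ι → E} {B : ℝ} (hB : 0 ≤ B) (h : ∑' i, ‖f i‖ₑ ≤ ENNReal.ofReal B) :
    Summable (fun i => ‖f i‖) ∧ ∑' i, ‖f i‖ ≤ B := by
  have hf : Summable (fun i => ‖f i‖) :=
    tsum_enorm_ne_top_iff_summable_norm.1 (ne_top_of_le_ne_top ENNReal.ofReal_ne_top h)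
  refine ⟨hf, (ENNReal.ofReal_le_ofReal_iff hB).1 ?_⟩
  rw [ENNReal.ofReal_tsum_of_nonneg (fun i => norm_nonneg _) hf]
  simpa only [ofReal_norm] using h

theorem tsum_enorm_mul_encard_le {I K : Type*} {c : I → ℂ} {S : I → Set K} {m : I → ℝ}
    {ν θ : ℝ} (hm : ∀ i, 0 ≤ m i) (hν : 0 ≤ ν)
    (hS : ∀ i, (S i).Finite ∧ ((S i).ncard : ℝ) ≤ m i * ν)
    (hθ : HasSum (fun i => ‖c i‖ * m i) θ) :
    ∑' i, ‖c i‖ₑ * (S i).encard ≤ ENNReal.ofReal (θ * ν) :=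
  calc ∑' i, ‖c i‖ₑ * (S i).encard ≤ ∑' i, ENNReal.ofReal (‖c i‖ * m i * ν) :=
        ENNReal.tsum_le_tsum fun i => by
          rw [← (hS i).1.cast_ncard_eq, ← ofReal_norm, mul_assoc,
            ENNReal.ofReal_mul (norm_nonneg _)]
          gcongr
          simpa using ENNReal.ofReal_le_ofReal (hS i).2
    _ = ENNReal.ofReal (θ * ν) := by
        rw [← ENNReal.ofReal_tsum_of_nonneg (fun i => by have := hm i; positivity)
          (hθ.mul_right ν).summable, (hθ.mul_right ν).tsum_eq]

section CommutesOutside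

variable {A K I : Type*} [Semigroup A] [Star A] {w : I → K → A} {S : I → Set K}

def CommutesOutside (w : I → K → A) (S : I → Set K) (a : A) : Prop :=
  ∀ i, ∀ k ∉ S i, Commute a (w i k) ∧ Commute a (star (w i k))

theorem CommutesOutside.mul {a b : A} (ha : CommutesOutside w S a)
    (hb : CommutesOutside w S b) : CommutesOutside w S (a * b) :=
  fun i k hk => ⟨(ha i k hk).1.mul_left (hb i k hk).1, (ha i k hk).2.mul_left (hb i k hk).2⟩

theorem commutesOutside_setOf_not_commute (w : I → K → A) (a : A) :
    CommutesOutside w (fun i => {k | w i k * a ≠ a * w i k ∨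
      star (w i k) * a ≠ a * star (w i k)}) a := fun i k hk => by
  simp only [Set.mem_ofPred_eq, not_or, not_not] at hk
  exact ⟨hk.1.symm, hk.2.symm⟩

end CommutesOutside

section Derivations

variable {A K I : Type*} [NormedRing A]

theorem enorm_mul_le_enorm_mul_enorm (a b : A) : ‖a * b‖ₑ ≤ ‖a‖ₑ * ‖b‖ₑ := by
  simpa only [enorm_eq_nnnorm, ← ENNReal.coe_mul, ENNReal.coe_le_coe] using nnnorm_mul_le a b

variable [NormedAlgebra ℂ A]

noncomputable def commutatorCLM (b : A) : A →L[ℂ] A :=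
  (ContinuousLinearMap.mul ℂ A).flip b - ContinuousLinearMap.mul ℂ A b

@[simp] theorem commutatorCLM_apply (b a : A) : commutatorCLM b a = a * b - b * a := rfl

theorem tsum_enorm_apply_sum_smul_le {κ J : Type*} (T : κ → A →L[ℂ] A) (F : Finset J)
    (d : J → ℂ) (u : J → A) :
    ∑' k, ‖T k (∑ j ∈ F, d j • u j)‖ₑ ≤ ∑ j ∈ F, ‖d j‖ₑ * ∑' k, ‖T k (u j)‖ₑ :=
  calc ∑' k, ‖T k (∑ j ∈ F, d j • u j)‖ₑ ≤ ∑' k, ∑ j ∈ F, ‖d j‖ₑ * ‖T k (u j)‖ₑ :=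
        ENNReal.tsum_le_tsum fun k => by
          rw [map_sum]
          refine (enorm_sum_le _ _).trans_eq ?_
          simp only [map_smul, enorm_smul]
    _ = ∑ j ∈ F, ‖d j‖ₑ * ∑' k, ‖T k (u j)‖ₑ := by
        rw [Summable.tsum_finsetSum fun _ _ => ENNReal.summable]
        simp_rw [ENNReal.tsum_mul_left]

theorem summable_and_tsum_norm_apply_sum_smul_le {κ J : Type*} (T : κ → A →L[ℂ] A)
    (F : Finset J) (d : J → ℂ) (u : J → A) {B : J → ℝ} (hB : ∀ j, 0 ≤ B j)
    (hu : ∀ j, ∑' k, ‖T k (u j)‖ₑ ≤ ENNReal.ofReal (B j)) :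
    Summable (fun k => ‖T k (∑ j ∈ F, d j • u j)‖) ∧
      ∑' k, ‖T k (∑ j ∈ F, d j • u j)‖ ≤ ∑ j ∈ F, ‖d j‖ * B j := by
  refine summable_norm_and_tsum_le_of_tsum_enorm_le
    (Finset.sum_nonneg fun j _ => mul_nonneg (norm_nonneg _) (hB j)) ?_
  calc _ ≤ ∑ j ∈ F, ‖d j‖ₑ * ∑' k, ‖T k (u j)‖ₑ := tsum_enorm_apply_sum_smul_le T F d u
    _ ≤ ∑ j ∈ F, ENNReal.ofReal (‖d j‖ * B j) := by
        gcongr with j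
        rw [ENNReal.ofReal_mul (norm_nonneg _), ofReal_norm]
        gcongr
        exact hu j
    _ = _ := (ENNReal.ofReal_sum_of_nonneg fun j _ => mul_nonneg (norm_nonneg _) (hB j)).symm

variable [StarRing A]

noncomputable def deltaStepCLM (r : K → A) (e : ℤ) (k : K) : A →L[ℂ] A :=
  if e = 1 then commutatorCLM (r k)
  else if e = -1 then -commutatorCLM (star (r k))
  else (2 : ℂ)⁻¹ • ((ContinuousLinearMap.mul ℂ A).flip (r k) ∘L (-commutatorCLM (star (r k)))
    + ContinuousLinearMap.mul ℂ A (star (r k)) ∘L commutatorCLM (r k))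

theorem deltaIter_cons (r : K → A) {n : ℕ} (ε : Fin (n + 1) → ℤ) (k₀ : K) (k : Fin n → K)
    (a : A) :
    deltaIter r ε (Fin.cons k₀ k) a = deltaIter r (Fin.tail ε) k (deltaStepCLM r (ε 0) k₀ a) := by
  simp only [deltaIter, List.ofFn_succ, List.foldl_cons, Fin.cons_zero, Fin.cons_succ]
  congr 1
  unfold deltaStepCLM
  split_ifs <;> simp only [add_apply, smul_apply, ContinuousLinearMap.comp_apply, neg_apply,
    ContinuousLinearMap.flip_apply, ContinuousLinearMap.mul_apply', commutatorCLM_apply, neg_sub]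

noncomputable def deltaIterCLM (r : K → A) :
    {n : ℕ} → (Fin n → ℤ) → (Fin n → K) → A →L[ℂ] A
  | 0, _, _ => .id ℂ A
  | _ + 1, ε, k => deltaIterCLM r (Fin.tail ε) (Fin.tail k) ∘L deltaStepCLM r (ε 0) (k 0)

@[simp] theorem deltaIterCLM_apply (r : K → A) {n : ℕ} (ε : Fin n → ℤ) (k : Fin n → K) (a : A) :
    deltaIterCLM r ε k a = deltaIter r ε k a := by
  induction n generalizing a with
  | zero => simp [deltaIterCLM, deltaIter]
  | succ n ih =>
    rw [← Fin.cons_self_tail k, deltaIter_cons, ← ih]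
    rfl

noncomputable def deltaCoeff (c : I → ℂ) (w : I → K → A) (e : ℤ) (k : K) (i : I) : A :=
  if e = 1 then c i • w i k else -star (c i • w i k)

section deltaCoeff

variable {c : I → ℂ} {w : I → K → A} {e : ℤ} {k : K} {i : I}

theorem Commute.deltaCoeff {b : A} (h : Commute b (w i k)) (h' : Commute b (star (w i k))) :
    Commute b (deltaCoeff c w e k i) := by
  unfold _root_.deltaCoeff
  split_ifs
  · exact h.smul_right _
  · simpa using ((h'.star_star.smul_right (c i)).star_star).neg_right

theorem commutesOutside_deltaCoeff (hwcomm : ∀ i k i' k', Commute (w i k) (w i' k'))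
    (hwcommstar : ∀ i k i' k', Commute (star (w i k)) (w i' k')) (S : I → Set K) :
    CommutesOutside w S (deltaCoeff c w e k i) := fun i' k' _ =>
  ⟨(Commute.deltaCoeff (hwcomm i' k' i k) (hwcommstar i k i' k').symm).symm,
    (Commute.deltaCoeff (hwcommstar i' k' i k) (hwcomm i' k' i k).star_star).symm⟩

variable [NormedStarGroup A]

theorem norm_deltaCoeff : ‖deltaCoeff c w e k i‖ = ‖c i‖ * ‖w i k‖ := by
  unfold deltaCoeff
  split_ifs <;> simp [norm_smul]

theorem hasSum_deltaStepCLM {r : K → A} (hr : ∀ k, HasSum (fun i => c i • w i k) (r k))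
    (he : e = 1 ∨ e = -1) (k : K) (a : A) :
    HasSum (fun i => a * deltaCoeff c w e k i - deltaCoeff c w e k i * a)
      (deltaStepCLM r e k a) := by
  rcases he with rfl | rfl
  · simpa [deltaCoeff, deltaStepCLM] using ((hr k).mul_left a).sub ((hr k).mul_right a)
  · simpa [deltaCoeff, deltaStepCLM, neg_add_eq_sub] using
      ((hr k).star.mul_right a).sub ((hr k).star.mul_left a)

end deltaCoeff

variable {κ : Type*} {w : I → K → A} {S : I → Set K} (T : κ → A →L[ℂ] A) {C : ℝ≥0∞}

theorem tsum_enorm_apply_commutator_le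
    (hT : ∀ b, CommutesOutside w S b → ∑' j, ‖T j b‖ₑ ≤ C * ‖b‖ₑ) {a v : A}
    (ha : CommutesOutside w S a) (hv : CommutesOutside w S v) :
    ∑' j, ‖T j (a * v - v * a)‖ₑ ≤ 2 * C * ‖a‖ₑ * ‖v‖ₑ :=
  calc ∑' j, ‖T j (a * v - v * a)‖ₑ ≤ ∑' j, (‖T j (a * v)‖ₑ + ‖T j (v * a)‖ₑ) :=
        ENNReal.tsum_le_tsum fun j => by rw [map_sub]; exact enorm_sub_le
    _ = ∑' j, ‖T j (a * v)‖ₑ + ∑' j, ‖T j (v * a)‖ₑ := ENNReal.tsum_add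
    _ ≤ C * ‖a * v‖ₑ + C * ‖v * a‖ₑ := add_le_add (hT _ (ha.mul hv)) (hT _ (hv.mul ha))
    _ ≤ C * (‖a‖ₑ * ‖v‖ₑ) + C * (‖v‖ₑ * ‖a‖ₑ) := by
        gcongr <;> exact enorm_mul_le_enorm_mul_enorm _ _
    _ = 2 * C * ‖a‖ₑ * ‖v‖ₑ := by ring

variable [NormedStarGroup A] {c : I → ℂ} {r : K → A}
  (hw : ∀ i k, ‖w i k‖ ≤ 1) (hwcomm : ∀ i k i' k', Commute (w i k) (w i' k'))
  (hwcommstar : ∀ i k i' k', Commute (star (w i k)) (w i' k'))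
  (hr : ∀ k, HasSum (fun i => c i • w i k) (r k))
include hw hwcomm hwcommstar hr

theorem tsum_tsum_enorm_apply_deltaStepCLM_le {t : ℝ≥0∞}
    (ht : ∑' i, ‖c i‖ₑ * (S i).encard ≤ t) {e : ℤ} (he : e = 1 ∨ e = -1)
    (hT : ∀ b, CommutesOutside w S b → ∑' j, ‖T j b‖ₑ ≤ C * ‖b‖ₑ) {a : A}
    (ha : CommutesOutside w S a) :
    ∑' (k : K) (j : κ), ‖T j (deltaStepCLM r e k a)‖ₑ ≤ 2 * t * C * ‖a‖ₑ := by
  set v := deltaCoeff c w e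
  have hvanish : ∀ i k, k ∉ S i → a * v k i - v k i * a = 0 := fun i k hk =>
    sub_eq_zero.2 (Commute.deltaCoeff (ha i k hk).1 (ha i k hk).2).eq
  have hterm : ∀ i k, ∑' j, ‖T j (a * v k i - v k i * a)‖ₑ ≤ ‖c i‖ₑ * (2 * C * ‖a‖ₑ) := by
    intro i k
    have hv : ‖v k i‖ₑ ≤ ‖c i‖ₑ := by
      simpa [← ofReal_norm, norm_deltaCoeff, v] using
        ENNReal.ofReal_le_ofReal (mul_le_of_le_one_right (norm_nonneg (c i)) (hw i k))
    calc _ ≤ 2 * C * ‖a‖ₑ * ‖v k i‖ₑ :=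
          tsum_enorm_apply_commutator_le T hT ha (commutesOutside_deltaCoeff hwcomm hwcommstar S)
      _ ≤ 2 * C * ‖a‖ₑ * ‖c i‖ₑ := by gcongr
      _ = _ := mul_comm _ _
  calc ∑' (k : K) (j : κ), ‖T j (deltaStepCLM r e k a)‖ₑ
      ≤ ∑' (k : K) (j : κ) (i : I), ‖T j (a * v k i - v k i * a)‖ₑ := by
        gcongr with k j
        rw [((T j).hasSum (hasSum_deltaStepCLM hr he k a)).tsum_eq.symm]
        exact enorm_tsum_le_tsum_enorm
    _ = ∑' (i : I) (k : S i) (j : κ), ‖T j (a * v k i - v k i * a)‖ₑ := by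
        simp_rw [ENNReal.tsum_comm (α := κ)]
        rw [ENNReal.tsum_comm]
        refine tsum_congr fun i => (tsum_subtype_eq_of_support_subset fun k hk => ?_).symm
        by_contra hkS
        exact hk (by simp only [hvanish i k hkS, map_zero, enorm_zero, tsum_zero])
    _ ≤ ∑' (i : I) (k : S i), ‖c i‖ₑ * (2 * C * ‖a‖ₑ) := by gcongr with i k; exact hterm i k
    _ = (∑' i, ‖c i‖ₑ * (S i).encard) * (2 * C * ‖a‖ₑ) := by
        rw [← ENNReal.tsum_mul_right]
        refine tsum_congr fun i => ?_
        rw [ENNReal.tsum_set_const]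
        ring
    _ ≤ t * (2 * C * ‖a‖ₑ) := by gcongr
    _ = 2 * t * C * ‖a‖ₑ := by ring

theorem tsum_enorm_deltaIter_le {t : ℝ≥0∞} (ht : ∑' i, ‖c i‖ₑ * (S i).encard ≤ t) {n : ℕ}
    (ε : Fin n → ℤ) (hε : ∀ l, ε l = 1 ∨ ε l = -1) {a : A} (ha : CommutesOutside w S a) :
    ∑' k : Fin n → K, ‖deltaIter r ε k a‖ₑ ≤ (2 * t) ^ n * ‖a‖ₑ := by
  induction n generalizing a with
  | zero => simp [deltaIter]
  | succ n ih =>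
    simp_rw [ENNReal.tsum_pi_fin_succ, deltaIter_cons, ← deltaIterCLM_apply]
    calc _ ≤ 2 * t * (2 * t) ^ n * ‖a‖ₑ :=
          tsum_tsum_enorm_apply_deltaStepCLM_le _ hw hwcomm hwcommstar hr ht (hε 0)
            (fun b hb => by simpa using ih (Fin.tail ε) (fun l => hε l.succ) hb) ha
      _ = _ := by ring

theorem tsum_enorm_deltaIter_le_ofReal {m : I → ℝ} {ν θ : ℝ} (hm : ∀ i, 0 ≤ m i) (hν : 0 ≤ ν)
    (hS : ∀ i, (S i).Finite ∧ ((S i).ncard : ℝ) ≤ m i * ν)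
    (hθ : HasSum (fun i => ‖c i‖ * m i) θ) {n : ℕ} (ε : Fin n → ℤ)
    (hε : ∀ l, ε l = 1 ∨ ε l = -1) {a : A} (ha : CommutesOutside w S a) :
    ∑' k : Fin n → K, ‖deltaIter r ε k a‖ₑ ≤ ENNReal.ofReal ((2 * θ * ν) ^ n) * ‖a‖ₑ := by
  have hθν : 0 ≤ θ * ν := mul_nonneg (hθ.nonneg fun i => mul_nonneg (norm_nonneg _) (hm i)) hν
  rw [mul_assoc, ENNReal.ofReal_pow (by positivity), ENNReal.ofReal_mul zero_le_two,
    ENNReal.ofReal_ofNat]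
  exact tsum_enorm_deltaIter_le hw hwcomm hwcommstar hr
    (tsum_enorm_mul_encard_le hm hν hS hθ) ε hε ha

end Derivations

theorem lemma31i_general
    {A : Type*} [NormedRing A] [StarRing A] [CStarRing A] [NormedAlgebra ℂ A]
    {I J : Type*}
    (d : ℕ)
    (w : I → (Fin d → ℤ) → A) (hwnorm : ∀ i k, ‖w i k‖ ≤ 1)
    (hwcomm : ∀ i k i' k', Commute (w i k) (w i' k'))
    (hwcommstar : ∀ i k i' k', Commute (star (w i k)) (w i' k'))
    (u : J → A) (hunorm : ∀ j, ‖u j‖ ≤ 1)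
    (m : I → ℝ) (hm : ∀ i, 0 ≤ m i) (ν : J → ℝ) (hν : ∀ j, 0 ≤ ν j)
    (hfin : ∀ i j,
      ({k : Fin d → ℤ | w i k * u j ≠ u j * w i k ∨
          star (w i k) * u j ≠ u j * star (w i k)}).Finite ∧
        (({k : Fin d → ℤ | w i k * u j ≠ u j * w i k ∨
            star (w i k) * u j ≠ u j * star (w i k)}).ncard : ℝ) ≤ m i * ν j)
    (c : I → ℂ)
    (θ₁ : ℝ) (hθ : HasSum (fun i => ‖c i‖ * m i) θ₁)
    (r : (Fin d → ℤ) → A) (hr : ∀ k, HasSum (fun i => c i • w i k) (r k))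
    (F : Finset J) (dcoef : J → ℂ) (x : A) (hx : x = ∑ j ∈ F, dcoef j • u j)
    (cx : ℝ)
    (hcx : ∀ M : ℕ, 1 ≤ M → ∑ j ∈ F, ‖dcoef j‖ * ν j ^ M ≤ cx ^ M)
    (n : ℕ) (hn : 1 ≤ n) (ε : Fin n → ℤ) (hε : ∀ l, ε l = 1 ∨ ε l = -1) :
    Summable (fun kbar : Fin n → (Fin d → ℤ) => ‖deltaIter r ε kbar x‖) ∧
      ∑' kbar : Fin n → (Fin d → ℤ), ‖deltaIter r ε kbar x‖ ≤ (2 * θ₁ * cx) ^ n := by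
  have hθ₁ : 0 ≤ θ₁ := hθ.nonneg fun i => mul_nonneg (norm_nonneg _) (hm i)
  have hu : ∀ j, ∑' k : Fin n → Fin d → ℤ, ‖deltaIterCLM r ε k (u j)‖ₑ ≤
      ENNReal.ofReal ((2 * θ₁ * ν j) ^ n) := fun j => by
    have hu1 : ‖u j‖ₑ ≤ 1 := by simpa [← ofReal_norm] using ENNReal.ofReal_le_ofReal (hunorm j)
    simpa using (tsum_enorm_deltaIter_le_ofReal hwnorm hwcomm hwcommstar hr hm (hν j)
      (hfin · j) hθ ε hε (commutesOutside_setOf_not_commute w (u j))).trans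
      (mul_le_of_le_one_right' hu1)
  simp_rw [hx, ← deltaIterCLM_apply]
  obtain ⟨hsum, hle⟩ := summable_and_tsum_norm_apply_sum_smul_le _ F dcoef u
    (fun j => by have := hν j; positivity) hu
  refine ⟨hsum, hle.trans ?_⟩
  calc ∑ j ∈ F, ‖dcoef j‖ * (2 * θ₁ * ν j) ^ n = (2 * θ₁) ^ n * ∑ j ∈ F, ‖dcoef j‖ * ν j ^ n := by
        rw [Finset.mul_sum]
        exact Finset.sum_congr rfl fun j _ => by ring
    _ ≤ (2 * θ₁) ^ n * cx ^ n := mul_le_mul_of_nonneg_left (hcx n hn) (by positivity)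
    _ = (2 * θ₁ * cx) ^ n := (mul_pow _ _ _).symm

/-- Lemma 3.1(i): for `x = ∑_{j ∈ F} d_j u_j` local and signs `ε_l ∈ {+1, -1}`, the sum over
all tuples `k̄ ∈ (ℤ^d)^n` of `‖δ^{ε_n}_{k_n}(⋯(δ^{ε₁}_{k₁}(x))⋯)‖` is at most `(2 θ₁ c_x)^n`. -/
theorem lemma31i
    {A : Type*} [NormedRing A] [StarRing A] [CStarRing A] [NormedAlgebra ℂ A]
    [CompleteSpace A]
    {I J : Type*} [Countable I]
    (d : ℕ) (hd : 1 ≤ d)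
    (w : I → (Fin d → ℤ) → A) (hwnorm : ∀ i k, ‖w i k‖ ≤ 1)
    (hwcomm : ∀ i k i' k', Commute (w i k) (w i' k'))
    (hwcommstar : ∀ i k i' k', Commute (star (w i k)) (w i' k'))
    (u : J → A) (hunorm : ∀ j, ‖u j‖ ≤ 1)
    (m : I → ℝ) (hm : ∀ i, 0 ≤ m i) (ν : J → ℝ) (hν : ∀ j, 0 ≤ ν j)
    (hfin : ∀ i j,
      ({k : Fin d → ℤ | w i k * u j ≠ u j * w i k ∨
          star (w i k) * u j ≠ u j * star (w i k)}).Finite ∧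
        (({k : Fin d → ℤ | w i k * u j ≠ u j * w i k ∨
            star (w i k) * u j ≠ u j * star (w i k)}).ncard : ℝ) ≤ m i * ν j)
    (c : I → ℂ) (hc : Summable fun i => ‖c i‖)
    (θ₁ : ℝ) (hθ : HasSum (fun i => ‖c i‖ * m i) θ₁)
    (r : (Fin d → ℤ) → A) (hr : ∀ k, HasSum (fun i => c i • w i k) (r k))
    (F : Finset J) (dcoef : J → ℂ) (x : A) (hx : x = ∑ j ∈ F, dcoef j • u j)
    (cx : ℝ) (hcx1 : 1 ≤ cx)
    (hcx : ∀ M : ℕ, 1 ≤ M → ∑ j ∈ F, ‖dcoef j‖ * ν j ^ M ≤ cx ^ M)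
    (n : ℕ) (hn : 1 ≤ n) (ε : Fin n → ℤ) (hε : ∀ l, ε l = 1 ∨ ε l = -1) :
    Summable (fun kbar : Fin n → (Fin d → ℤ) => ‖deltaIter r ε kbar x‖) ∧
      ∑' kbar : Fin n → (Fin d → ℤ), ‖deltaIter r ε kbar x‖ ≤ (2 * θ₁ * cx) ^ n :=
  lemma31i_general d w hwnorm hwcomm hwcommstar u hunorm m hm ν hν hfin c θ₁ hθ r hr F dcoef x hx cx
    hcx n hn ε hε
end

section
/- Let A be a unital complex *-algebra and (r_k)_{k∈ℤ^d} a family of elements of A such that all the elements r_k together with all the adjoints r_k* pairwise commute. Define δ_k(a) := a r_k − r_k a, δ_k†(a) := r_k* a − a r_k*, and ℒ_k(a) := (1/2)(δ_k†(a)·r_k + r_k*·δ_k(a)). Then for every n ≥ 1, all k₁,…,k_n ∈ ℤ^d and all x ∈ A: ℒ_{k_n}(ℒ_{k_{n−1}}(⋯ℒ_{k_1}(x)⋯)) = 2^{−n} · Σ_{P ⊆ {1,…,n}} (Π_{l∈P^c} r_{k_l})* · (δ^{ε_n}_{k_n} ∘ ⋯ ∘ δ^{ε₁}_{k₁})(x)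 · (Π_{l∈P} r_{k_l}), where for each subset P the signs are ε_l = −1 (i.e. δ†_{k_l}) if l ∈ P and ε_l = +1 (i.e. δ_{k_l}) if l ∈ P^c, and the products Π over P and its complement P^c = {1,…,n}∖P are well defined by commutativity of the r_{k_l}. -/
open scoped BigOperators

/-!
Induction on `n`. If `c` and `c*` commute with `s` and `t`, then `ℒ_c (s* y t) = s* ℒ_c(y) t`.
Writing `2 ℒ_c(y) = (c* y - y c*) c + c* (y c - c y)`, the term of the expansion indexed by
`Q ⊆ {1, …, n}` is therefore sent by `ℒ_{k_{n+1}}` to half the sum of the terms indexed by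
`Q` and `Q ∪ {n + 1}` in the expansion for `n + 1`: the new factor `c = r_{k_{n+1}}` joins the
starred product on the left in the first case and the product on the right in the second.
-/

namespace Finset

theorem powerset_map {α β : Type*} (e : α ↪ β) (s : Finset α) :
    (s.map e).powerset = s.powerset.map (mapEmbedding e).toEmbedding := by
  ext t
  simp only [mem_powerset, subset_map_iff, mem_map, RelEmbedding.coe_toEmbedding,
    mapEmbedding_apply]
  exact exists_congr fun u => by rw [eq_comm]

theorem noncommProd_map {α β γ : Type*} [Monoid γ] (s : Finset α) (e : α ↪ β) (f : β → γ)
    (comm) :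
    (s.map e).noncommProd f comm = s.noncommProd (f ∘ e) fun _ ha _ hb hab =>
      comm (mem_map_of_mem e ha) (mem_map_of_mem e hb) (e.injective.ne hab) := by
  simp only [noncommProd, map_val, Multiset.map_map]

end Finset

namespace Fin

theorem sum_finset_succ {M : Type*} [AddCommMonoid M] {n : ℕ}
    (f : Finset (Fin (n + 1)) → M) :
    ∑ P, f P = ∑ Q : Finset (Fin n),
      (f (Q.map castSuccEmb) + f (insert (last n) (Q.map castSuccEmb))) := by
  rw [← Finset.powerset_univ, univ_castSuccEmb, Finset.cons_eq_insert,
    Finset.sum_powerset_insert (by simp), Finset.powerset_map, Finset.sum_map, Finset.sum_map,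
    Finset.powerset_univ, ← Finset.sum_add_distrib]
  rfl

theorem compl_map_castSuccEmb {n : ℕ} (Q : Finset (Fin n)) :
    (Q.map castSuccEmb)ᶜ = insert (last n) (Qᶜ.map castSuccEmb) := by
  ext j
  induction j using lastCases with
  | last => simp
  | cast i => simp [(castSucc_lt_last i).ne]

theorem compl_insert_last_map_castSuccEmb {n : ℕ} (Q : Finset (Fin n)) :
    (insert (last n) (Q.map castSuccEmb))ᶜ = Qᶜ.map castSuccEmb := by
  rw [Finset.compl_insert, compl_map_castSuccEmb, Finset.erase_insert (by simp)]

end Fin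

section Lindblad

variable {A : Type*} [Ring A] [StarRing A] [Algebra ℂ A]

noncomputable def lindblad (c : A) : A →ₗ[ℂ] A where
  toFun a := (2 : ℂ)⁻¹ • ((star c * a - a * star c) * c + star c * (a * c - c * a))
  map_add' a b := by
    rw [← smul_add]
    noncomm_ring
  map_smul' z a := by
    simp only [RingHom.id_apply, mul_smul_comm, smul_mul_assoc, ← smul_sub, ← smul_add]
    exact smul_comm _ _ _

theorem lindblad_apply (c a : A) :
    lindblad c a = (2 : ℂ)⁻¹ • ((star c * a - a * star c) * c + star c * (a * c - c * a)) :=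
  rfl

theorem lindblad_star_mul_mul {c s t : A} (hs : Commute c s) (hs' : Commute (star c) s)
    (ht : Commute c t) (ht' : Commute (star c) t) (y : A) :
    lindblad c (star s * y * t) = star s * lindblad c y * t := by
  have hsc : Commute (star c) (star s) := hs.star_star
  have hsc' : Commute c (star s) := by simpa using hs'.star_star
  simp only [lindblad_apply, mul_smul_comm, smul_mul_assoc, mul_sub, sub_mul, mul_add, add_mul,
    mul_assoc]
  rw [ht.eq, ← ht'.left_comm, hsc.left_comm, hsc'.left_comm, hsc.left_comm]

end Lindblad

section DeltaIter

variable {A K : Type*} [Ring A] [StarRing A]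

theorem deltaIter_zero [Module ℂ A] (r : K → A) (ε : Fin 0 → ℤ) (k : Fin 0 → K) (x : A) :
    deltaIter r ε k x = x := by
  simp [deltaIter]

theorem deltaIter_succ [Module ℂ A] (r : K → A) {n : ℕ} (ε : Fin (n + 1) → ℤ)
    (k : Fin (n + 1) → K) (x : A) :
    deltaIter r ε k x =
      let c := r (k (Fin.last n))
      let y := deltaIter r (fun i => ε i.castSucc) (fun i => k i.castSucc) x
      if ε (Fin.last n) = 1 then y * c - c * y
      else if ε (Fin.last n) = -1 then star c * y - y * star c
      else (2 : ℂ)⁻¹ • ((star c * y - y * star c) * c + star c * (y * c - c * y)) := by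
  rw [deltaIter, List.ofFn_succ', List.concat_eq_append, List.foldl_append]
  rfl

theorem deltaIter_succ_of_eq_one [Module ℂ A] (r : K → A) {n : ℕ} {ε : Fin (n + 1) → ℤ}
    (hε : ε (Fin.last n) = 1) (k : Fin (n + 1) → K) (x : A) :
    deltaIter r ε k x =
      deltaIter r (fun i => ε i.castSucc) (fun i => k i.castSucc) x * r (k (Fin.last n))
        - r (k (Fin.last n)) * deltaIter r (fun i => ε i.castSucc) (fun i => k i.castSucc) x := by
  simp [deltaIter_succ, hε]

theorem deltaIter_succ_of_eq_neg_one [Module ℂ A] (r : K → A) {n : ℕ} {ε : Fin (n + 1) → ℤ}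
    (hε : ε (Fin.last n) = -1) (k : Fin (n + 1) → K) (x : A) :
    deltaIter r ε k x =
      star (r (k (Fin.last n))) * deltaIter r (fun i => ε i.castSucc) (fun i => k i.castSucc) x
        - deltaIter r (fun i => ε i.castSucc) (fun i => k i.castSucc) x
          * star (r (k (Fin.last n))) := by
  simp [deltaIter_succ, hε]

theorem deltaIter_const_zero_succ [Algebra ℂ A] (r : K → A) {n : ℕ} (k : Fin (n + 1) → K)
    (x : A) :
    deltaIter r (fun _ => 0) k x =
      lindblad (r (k (Fin.last n))) (deltaIter r (fun _ => 0) (fun i => k i.castSucc) x) := by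
  simp [deltaIter_succ, lindblad_apply]

end DeltaIter

section SubsetProd

variable {A K : Type*} [Ring A] (r : K → A) (hcomm : ∀ p q : K, Commute (r p) (r q))

def subsetProd {n : ℕ} (k : Fin n → K) (P : Finset (Fin n)) : A :=
  P.noncommProd (fun l => r (k l)) fun a _ b _ _ => hcomm (k a) (k b)

theorem commute_subsetProd {a : A} (ha : ∀ p, Commute a (r p)) {n : ℕ} (k : Fin n → K)
    (P : Finset (Fin n)) : Commute a (subsetProd r hcomm k P) :=
  Finset.noncommProd_commute _ _ _ _ fun _ _ => ha _

theorem subsetProd_map_castSuccEmb {n : ℕ} (k : Fin (n + 1) → K) (Q : Finset (Fin n)) :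
    subsetProd r hcomm k (Q.map Fin.castSuccEmb)
      = subsetProd r hcomm (fun i => k i.castSucc) Q :=
  Finset.noncommProd_map _ _ _ _

theorem subsetProd_insert_last {n : ℕ} (k : Fin (n + 1) → K) (Q : Finset (Fin n)) :
    subsetProd r hcomm k (insert (Fin.last n) (Q.map Fin.castSuccEmb))
      = r (k (Fin.last n)) * subsetProd r hcomm (fun i => k i.castSucc) Q :=
  (Finset.noncommProd_insert_of_notMem _ _ _ _ (by simp)).trans
    (congrArg _ (subsetProd_map_castSuccEmb r hcomm k Q))

end SubsetProd

section ExpansionTerm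

variable {A K : Type*} [Ring A] [StarRing A] [Module ℂ A] (r : K → A)
  (hcomm : ∀ p q : K, Commute (r p) (r q))

noncomputable def expansionTerm {n : ℕ} (k : Fin n → K) (x : A) (P : Finset (Fin n)) : A :=
  star (subsetProd r hcomm k Pᶜ) * deltaIter r (fun l => if l ∈ P then (-1 : ℤ) else 1) k x
    * subsetProd r hcomm k P

theorem expansionTerm_map_castSuccEmb {n : ℕ} (k : Fin (n + 1) → K) (x : A) (Q : Finset (Fin n)) :
    let c := r (k (Fin.last n))
    let y := deltaIter r (fun l => if l ∈ Q then (-1 : ℤ) else 1) (fun i => k i.castSucc) x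
    expansionTerm r hcomm k x (Q.map Fin.castSuccEmb)
      = star (c * subsetProd r hcomm (fun i => k i.castSucc) Qᶜ) * (y * c - c * y)
        * subsetProd r hcomm (fun i => k i.castSucc) Q := by
  rw [expansionTerm, Fin.compl_map_castSuccEmb, subsetProd_insert_last,
    subsetProd_map_castSuccEmb, deltaIter_succ_of_eq_one r (by simp)]
  simp

theorem expansionTerm_insert_last {n : ℕ} (k : Fin (n + 1) → K) (x : A) (Q : Finset (Fin n)) :
    let c := r (k (Fin.last n))
    let y := deltaIter r (fun l => if l ∈ Q then (-1 : ℤ) else 1) (fun i => k i.castSucc) x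
    expansionTerm r hcomm k x (insert (Fin.last n) (Q.map Fin.castSuccEmb))
      = star (subsetProd r hcomm (fun i => k i.castSucc) Qᶜ) * (star c * y - y * star c)
        * (c * subsetProd r hcomm (fun i => k i.castSucc) Q) := by
  rw [expansionTerm, Fin.compl_insert_last_map_castSuccEmb, subsetProd_insert_last,
    subsetProd_map_castSuccEmb, deltaIter_succ_of_eq_neg_one r (by simp)]
  simp

end ExpansionTerm

section Expansion

variable {A K : Type*} [Ring A] [StarRing A] [Algebra ℂ A] (r : K → A)
  (hcomm : ∀ p q : K, Commute (r p) (r q))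

theorem lindblad_expansionTerm (hcommstar : ∀ p q : K, Commute (star (r p)) (r q)) {n : ℕ}
    (k : Fin (n + 1) → K) (x : A) (Q : Finset (Fin n)) :
    lindblad (r (k (Fin.last n))) (expansionTerm r hcomm (fun i => k i.castSucc) x Q)
      = (2 : ℂ)⁻¹ • (expansionTerm r hcomm k x (Q.map Fin.castSuccEmb)
          + expansionTerm r hcomm k x (insert (Fin.last n) (Q.map Fin.castSuccEmb))) := by
  have hc := hcomm (k (Fin.last n))
  have hc' := hcommstar (k (Fin.last n))
  rw [expansionTerm_map_castSuccEmb, expansionTerm_insert_last, expansionTerm,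
    lindblad_star_mul_mul (commute_subsetProd r hcomm hc _ _)
      (commute_subsetProd r hcomm hc' _ _) (commute_subsetProd r hcomm hc _ _)
      (commute_subsetProd r hcomm hc' _ _), lindblad_apply, star_mul]
  simp only [mul_smul_comm, smul_mul_assoc, mul_add, add_mul, mul_assoc]
  rw [add_comm]

theorem deltaIter_const_zero_eq_sum (hcommstar : ∀ p q : K, Commute (star (r p)) (r q))
    {n : ℕ} (k : Fin n → K) (x : A) :
    deltaIter r (fun _ => 0) k x = (2 : ℂ)⁻¹ ^ n • ∑ P, expansionTerm r hcomm k x P := by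
  induction n with
  | zero => simp [Finset.eq_empty_of_isEmpty, expansionTerm, subsetProd, deltaIter_zero]
  | succ n ih =>
    simp only [deltaIter_const_zero_succ, ih, map_smul, map_sum,
      lindblad_expansionTerm r hcomm hcommstar, Fin.sum_finset_succ (expansionTerm r hcomm k x),
      ← Finset.smul_sum, smul_smul, ← pow_succ]

end Expansion

theorem lemma31ii_general {A K : Type*} [Ring A] [Algebra ℂ A] [StarRing A]
    (r : K → A)
    (hcomm : ∀ p q : K, Commute (r p) (r q))
    (hcommstar : ∀ p q : K, Commute (star (r p)) (r q))
    (n : ℕ) (k : Fin n → K) (x : A) :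
    deltaIter r (fun _ : Fin n => (0 : ℤ)) k x
      = (2 : ℂ)⁻¹ ^ n • ∑ P : Finset (Fin n),
          star (Finset.noncommProd Pᶜ (fun l => r (k l))
              (fun a _ b _ _ => hcomm (k a) (k b)))
            * deltaIter r (fun l => if l ∈ P then (-1 : ℤ) else 1) k x
            * Finset.noncommProd P (fun l => r (k l))
              (fun a _ b _ _ => hcomm (k a) (k b)) :=
  deltaIter_const_zero_eq_sum r hcomm hcommstar k x

/-- Lemma 3.1(ii): the iterated Lindbladian `ℒ_{k_n} ∘ ⋯ ∘ ℒ_{k_1}` expands as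
`2^{-n} ∑_{P ⊆ {1,…,n}} (∏_{l ∈ Pᶜ} r_{k_l})* ⬝ δ(k̄, ε̄_P)(x) ⬝ (∏_{l ∈ P} r_{k_l})`,
where `ε_l = -1` for `l ∈ P` and `ε_l = +1` for `l ∈ Pᶜ`. -/
theorem lemma31ii {A K : Type*} [Ring A] [Algebra ℂ A] [StarRing A]
    (r : K → A)
    (hcomm : ∀ p q : K, Commute (r p) (r q))
    (hcommstar : ∀ p q : K, Commute (star (r p)) (r q))
    (n : ℕ) (hn : 1 ≤ n) (k : Fin n → K) (x : A) :
    deltaIter r (fun _ : Fin n => (0 : ℤ)) k x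
      = (2 : ℂ)⁻¹ ^ n • ∑ P : Finset (Fin n),
          star (Finset.noncommProd Pᶜ (fun l => r (k l))
              (fun a _ b _ _ => hcomm (k a) (k b)))
            * deltaIter r (fun l => if l ∈ P then (-1 : ℤ) else 1) k x
            * Finset.noncommProd P (fun l => r (k l))
              (fun a _ b _ _ => hcomm (k a) (k b)) :=
  lemma31ii_general r hcomm hcommstar n k x
end
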